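/- Let H ∈ [0, 1/2), set R := artanh(2H), let C ≤ −1, and define g_C : ℝ → ℝ by g_C(s) = (2H·sinh s + C·√(1−4H²))/cosh s and M_C := arcosh(−C) − R. Then g_C(M_C) = −1, and for every s ∈ ℝ one has |g_C(s)| < 1 if and only if s < −R − arcosh(−C) or s > M_C. In particular (M_C, +∞) is the maximal interval containing +∞ on which |g_C| < 1. -/

import Mathlib

open Real

/-- The inverse hyperbolic tangent. -/
noncomputable def artanh (x : ℝ) : ℝ := Real.log ((1 + x) / (1 - x)) / 2

/-- The inverse hyperbolic cosine (on `[1, ∞)`). -/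
noncomputable def arcosh (x : ℝ) : ℝ := Real.log (x + Real.sqrt (x ^ 2 - 1))

/-! The substitution `2H = tanh R` turns `g_C` into
`g_C(s) = (sinh R · sinh s + C) / (cosh R · cosh s)`. By the addition formulas,
`|g_C(s)| < 1` then means `-cosh (s + R) < C < cosh (s - R)`. For `C ≤ -1` the right inequality
always holds, and the left one reads `arcosh (-C) < |s + R|`; at `s = M_C` equality holds instead,
so `g_C(M_C) = -1`. A connected set reaching `+∞` on which `|g_C| < 1` cannot contain `M_C`,
hence lies to its right. -/

lemma artanh_eq_real_artanh {x : ℝ} (hx : x ∈ Set.Icc (-1) 1) :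
    _root_.artanh x = Real.artanh x := by
  rw [Real.artanh_eq_half_log hx, _root_.artanh]
  ring

lemma arcosh_eq_real_arcosh : _root_.arcosh = Real.arcosh := rfl

lemma mul_sinh_add_mul_sqrt_div_cosh {t : ℝ} (ht : t ∈ Set.Ioo (-1) 1) (c s : ℝ) :
    (t * sinh s + c * √(1 - t ^ 2)) / cosh s
      = (sinh (Real.artanh t) * sinh s + c) / (cosh (Real.artanh t) * cosh s) := by
  have hsqrt : 0 < √(1 - t ^ 2) := Real.sqrt_pos.mpr (by nlinarith [ht.1, ht.2])
  rw [Real.sinh_artanh ht, Real.cosh_artanh ht]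
  field_simp [(cosh_pos s).ne']

lemma abs_sinh_mul_sinh_add_div_lt_one_iff (R c s : ℝ) :
    |(sinh R * sinh s + c) / (cosh R * cosh s)| < 1 ↔ -cosh (s + R) < c ∧ c < cosh (s - R) := by
  have hpos : 0 < cosh R * cosh s := mul_pos (cosh_pos R) (cosh_pos s)
  rw [abs_div, abs_of_pos hpos, div_lt_one hpos, abs_lt, cosh_add, cosh_sub]
  constructor <;> rintro ⟨h₁, h₂⟩ <;> constructor <;> linarith

lemma sinh_mul_sinh_add_div_eq_neg_one {R c s : ℝ} (h : cosh (s + R) = -c) :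
    (sinh R * sinh s + c) / (cosh R * cosh s) = -1 := by
  rw [cosh_add] at h
  rw [div_eq_iff (mul_pos (cosh_pos R) (cosh_pos s)).ne']
  linarith

lemma lt_cosh_iff_arcosh_lt_abs {x y : ℝ} (hy : 1 ≤ y) : y < cosh x ↔ Real.arcosh y < |x| := by
  conv_lhs => rw [← Real.cosh_arcosh hy]
  rw [cosh_lt_cosh, abs_of_nonneg (Real.arcosh_nonneg hy)]

lemma abs_sinh_mul_sinh_add_div_lt_one_iff_of_le_neg_one {c : ℝ} (hc : c ≤ -1) (R s : ℝ) :
    |(sinh R * sinh s + c) / (cosh R * cosh s)| < 1 ↔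
      s < -R - Real.arcosh (-c) ∨ Real.arcosh (-c) - R < s := by
  have hright : c < cosh (s - R) := by linarith [one_le_cosh (s - R)]
  rw [abs_sinh_mul_sinh_add_div_lt_one_iff, and_iff_left hright, neg_lt,
    lt_cosh_iff_arcosh_lt_abs (by linarith), lt_abs]
  constructor <;> rintro (h | h)
  exacts [Or.inr (by linarith), Or.inl (by linarith), Or.inr (by linarith), Or.inl (by linarith)]

lemma IsPreconnected.subset_Ioi_of_notMem {I : Set ℝ} (hI : IsPreconnected I)
    (hunbdd : ∀ b, ∃ s ∈ I, b < s) {a : ℝ} (ha : a ∉ I) : I ⊆ Set.Ioi a := by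
  intro s hs
  by_contra hsa
  obtain ⟨s', hs', has'⟩ := hunbdd a
  exact ha (hI.ordConnected.out hs hs' ⟨not_lt.mp hsa, has'.le⟩)

/-- For `H ∈ [0, 1/2)`, `R = artanh(2H)`, `C ≤ −1`,
`g_C(s) = (2H·sinh s + C·√(1−4H²))/cosh s` and `M_C = arcosh(−C) − R`,
one has `g_C(M_C) = −1`, and `|g_C(s)| < 1` iff `s < −R − arcosh(−C)` or `s > M_C`;
in particular `(M_C, ∞)` is the maximal interval containing `+∞` on which `|g_C| < 1`. -/
theorem gC_eq_neg_one_at_MC_and_abs_lt_one_iff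
    (H : ℝ) (hH0 : 0 ≤ H) (hH : H < 1 / 2) (R : ℝ) (hR : R = _root_.artanh (2 * H))
    (C : ℝ) (hC : C ≤ -1) (g : ℝ → ℝ)
    (hg : ∀ s : ℝ, g s = (2 * H * Real.sinh s + C * Real.sqrt (1 - 4 * H ^ 2)) / Real.cosh s)
    (M : ℝ) (hM : M = _root_.arcosh (-C) - R) :
    g M = -1 ∧
    (∀ s : ℝ, |g s| < 1 ↔ (s < -R - _root_.arcosh (-C) ∨ M < s)) ∧
    ∀ I : Set ℝ, IsConnected I → (∀ s ∈ I, |g s| < 1) →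
      (∀ b : ℝ, ∃ s ∈ I, b < s) → I ⊆ Set.Ioi M := by
  have ht : 2 * H ∈ Set.Ioo (-1) 1 := ⟨by linarith, by linarith⟩
  rw [artanh_eq_real_artanh (Set.Ioo_subset_Icc_self ht)] at hR
  rw [arcosh_eq_real_arcosh] at hM ⊢
  have hg' : ∀ s, g s = (sinh R * sinh s + C) / (cosh R * cosh s) := fun s ↦ by
    rw [hg, hR, ← mul_sinh_add_mul_sqrt_div_cosh ht, mul_pow]
    norm_num
  have hgM : g M = -1 := by
    rw [hg']
    apply sinh_mul_sinh_add_div_eq_neg_one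
    rw [hM, sub_add_cancel, Real.cosh_arcosh (by linarith)]
  refine ⟨hgM, fun s ↦ ?_, fun I hI hlt hunbdd ↦ hI.isPreconnected.subset_Ioi_of_notMem hunbdd ?_⟩
  · rw [hg', abs_sinh_mul_sinh_add_div_lt_one_iff_of_le_neg_one hC, hM]
  · intro hMI
    simpa [hgM] using hlt M hMI
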